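/- For integers m ≥ 0 and 0 ≤ j ≤ 2m, the middle-row entries of the symmetric Krawtchouk matrix of order 2m satisfy: if j is even, C(2m,j) · Φ^{2m}_{m,j} = (−1)^{j/2} · C(m, j/2) · C(2m, m); if j is odd, Φ^{2m}_{m,j} = 0. -/

import Mathlib

/-!
Krawtchouk duality `C(N,j) Φ^N_{n,j} = C(N,n) Φ^N_{j,n}` holds term by term, since both
`C(N,j) C(j,k) C(N-j,n-k)` and `C(N,n) C(n,k) C(N-n,j-k)` equal the multinomial coefficient
`N! / (k! (j-k)! (n-k)! (N-j-n+k)!)`. For `N = 2m`, `n = m` it turns the middle row into the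
middle column, and `Φ^{2m}_{j,m}` is the coefficient of `z^j` in `(1-z)^m (1+z)^m = (1-z²)^m`.
-/

open Finset Polynomial

/-- Symmetric Krawtchouk values:
`Φ^N_{n,j} = ∑_k (-1)^k C(j,k) C(N-j, n-k)`, the coefficient of `z^n` in
`(1+z)^(N-j) (1-z)^j`. -/
def symKrawtchouk (N n j : ℕ) : ℤ :=
  ∑ k ∈ Finset.range (j + 1),
    if k ≤ n then (-1 : ℤ) ^ k * (j.choose k) * ((N - j).choose (n - k)) else 0

theorem Nat.choose_mul_choose_mul_choose_transpose (a b c d : ℕ) :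
    (a + b + (c + d)).choose (a + b) * (a + b).choose a * (c + d).choose c =
      (a + c + (b + d)).choose (a + c) * (a + c).choose a * (b + d).choose b := by
  have hfac (n : ℕ) : (n.factorial : ℚ) ≠ 0 := by positivity
  rw [← Nat.cast_inj (R := ℚ)]
  push_cast
  simp only [Nat.cast_add_choose]
  rw [show a + c + (b + d) = a + b + (c + d) by ring]
  field_simp

theorem Nat.choose_mul_choose_mul_choose_sub_swap {N n j k : ℕ} (hn : n ≤ N) (hj : j ≤ N)
    (hkn : k ≤ n) (hkj : k ≤ j) :
    N.choose j * j.choose k * (N - j).choose (n - k) =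
      N.choose n * n.choose k * (N - n).choose (j - k) := by
  by_cases h : n - k ≤ N - j
  · have := choose_mul_choose_mul_choose_transpose k (j - k) (n - k) (N - j - (n - k))
    rwa [show k + (j - k) = j by omega, show n - k + (N - j - (n - k)) = N - j by omega,
      show k + (n - k) = n by omega, show j - k + (N - j - (n - k)) = N - n by omega,
      show j + (N - j) = N by omega, show n + (N - n) = N by omega] at this
  · rw [choose_eq_zero_of_lt (by omega : N - j < n - k),
      choose_eq_zero_of_lt (by omega : N - n < j - k), mul_zero, mul_zero]

theorem Polynomial.coeff_one_sub_X_pow {R : Type*} [CommRing R] (n k : ℕ) :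
    ((1 - X : R[X]) ^ n).coeff k = (-1 : R) ^ k * n.choose k := by
  have : (1 - X : R[X]) ^ n = ((1 + X) ^ n).comp (C (-1) * X) := by
    simp [sub_eq_add_neg]
  rw [this, comp_C_mul_X_coeff, coeff_one_add_X_pow, mul_comm]

theorem Polynomial.coeff_one_sub_X_sq_pow {R : Type*} [CommRing R] (n k : ℕ) :
    ((1 - X ^ 2 : R[X]) ^ n).coeff k =
      if Even k then (-1 : R) ^ (k / 2) * n.choose (k / 2) else 0 := by
  have : (1 - X ^ 2 : R[X]) ^ n = expand R 2 ((1 - X) ^ n) := by simp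
  simp_rw [this, coeff_expand two_pos, coeff_one_sub_X_pow, even_iff_two_dvd]

theorem symKrawtchouk_eq_sum_range_of_le {N n j M : ℕ} (hM : j ≤ M) :
    symKrawtchouk N n j = ∑ k ∈ range (M + 1),
      if k ≤ n then (-1 : ℤ) ^ k * j.choose k * (N - j).choose (n - k) else 0 := by
  refine sum_subset (range_subset_range.2 (by omega)) fun k _ hk => ?_
  simp [Nat.choose_eq_zero_of_lt (by simpa using hk : j < k)]

theorem symKrawtchouk_eq_coeff (N n j : ℕ) :
    symKrawtchouk N n j = ((1 - X) ^ j * (1 + X) ^ (N - j) : ℤ[X]).coeff n := by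
  rw [coeff_mul, Nat.sum_antidiagonal_eq_sum_range_succ
    (fun a b => ((1 - X : ℤ[X]) ^ j).coeff a * ((1 + X : ℤ[X]) ^ (N - j)).coeff b),
    symKrawtchouk_eq_sum_range_of_le (M := j + n) (by omega), ← sum_filter]
  have : {k ∈ range (j + n + 1) | k ≤ n} = range (n + 1) := by
    ext k
    simp only [mem_filter, mem_range]
    omega
  simp only [this, coeff_one_sub_X_pow, coeff_one_add_X_pow, Nat.succ_eq_add_one]

theorem choose_mul_symKrawtchouk_comm {N n j : ℕ} (hn : n ≤ N) (hj : j ≤ N) :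
    (N.choose j : ℤ) * symKrawtchouk N n j = N.choose n * symKrawtchouk N j n := by
  rw [symKrawtchouk_eq_sum_range_of_le hj, symKrawtchouk_eq_sum_range_of_le hn,
    mul_sum, mul_sum]
  refine sum_congr rfl fun k _ => ?_
  by_cases hkn : k ≤ n <;> by_cases hkj : k ≤ j
  · simp only [if_pos hkn, if_pos hkj]
    have hz : (N.choose j * j.choose k * (N - j).choose (n - k) : ℤ) =
        N.choose n * n.choose k * (N - n).choose (j - k) := by
      exact_mod_cast Nat.choose_mul_choose_mul_choose_sub_swap hn hj hkn hkj
    linear_combination (-1 : ℤ) ^ k * hz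
  all_goals simp [*, Nat.choose_eq_zero_of_lt (not_le.1 _)]

theorem symKrawtchouk_two_mul_middle_column (m j : ℕ) :
    symKrawtchouk (2 * m) j m = if Even j then (-1 : ℤ) ^ (j / 2) * m.choose (j / 2) else 0 := by
  rw [symKrawtchouk_eq_coeff, two_mul, Nat.add_sub_cancel, ← mul_pow,
    show (1 - X) * (1 + X) = (1 - X ^ 2 : ℤ[X]) by ring, coeff_one_sub_X_sq_pow]

/-- Middle-row entries for even order `N = 2m`:
`C(2m,j)·Φ^{2m}_{m,j} = (−1)^{j/2}·C(m,j/2)·C(2m,m)` for even `j`, and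
`Φ^{2m}_{m,j} = 0` for odd `j`. -/
theorem symKrawtchouk_middle_row_even (m j : ℕ) (hj : j ≤ 2 * m) :
    (Even j →
        ((2 * m).choose j : ℤ) * symKrawtchouk (2 * m) m j =
          (-1 : ℤ) ^ (j / 2) * (m.choose (j / 2) : ℤ) * ((2 * m).choose m : ℤ)) ∧
      (Odd j → symKrawtchouk (2 * m) m j = 0) := by
  have duality := choose_mul_symKrawtchouk_comm (by omega : m ≤ 2 * m) hj
  rw [symKrawtchouk_two_mul_middle_column] at duality
  refine ⟨fun hje => ?_, fun hjo => ?_⟩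
  · rw [duality, if_pos hje]
    ring
  · rw [if_neg (Nat.not_even_iff_odd.2 hjo), mul_zero] at duality
    exact (mul_eq_zero.1 duality).resolve_left (by exact_mod_cast (Nat.choose_pos hj).ne')
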